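/- arXiv:2008.03491 — 4 statements merged into one kernel-verified Lean document; each statement's English description precedes it below -/
import Mathlib

section
/- Let ρ ∈ ℝ, ρ ≠ 0. If R(L) is closed in K×E, [Tx,Tx]_K + ρ·[Vx,Vx]_E ≥ 0 for every x ∈ H, and R(L) + R(L)^[⊥] is closed in K×E (i.e. R(L) is a nonnegative pseudo-regular subspace for [·,·]_ρ), then for every z₀ ∈ E the set sp(z₀) is nonempty, i.e. the function x ↦ [Tx,Tx]_K attains a minimum on {x ∈ H : Vx = z₀}. -/
open scoped ComplexInnerProductSpace Pointwise

noncomputable section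

variable {H K E : Type*}
  [NormedAddCommGroup H] [InnerProductSpace ℂ H] [CompleteSpace H]
  [NormedAddCommGroup K] [InnerProductSpace ℂ K] [CompleteSpace K]
  [NormedAddCommGroup E] [InnerProductSpace ℂ E] [CompleteSpace E]

/-- The operator `T^#T + ρ·V^#V = T*∘J_K∘T + ρ·V*∘J_E∘V` on `H`. -/
def smOp (JK : K →L[ℂ] K) (JE : E →L[ℂ] E) (T : H →L[ℂ] K) (V : H →L[ℂ] E) (ρ : ℝ) :
    H →L[ℂ] H :=
  (ContinuousLinearMap.adjoint T) ∘L JK ∘L T +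
    (ρ : ℂ) • ((ContinuousLinearMap.adjoint V) ∘L JE ∘L V)

/-- An operator on `H` is positive semidefinite if its quadratic form `⟨Ax,x⟩` is real
and nonnegative for every `x`. -/
def IsPosSemidef (A : H →L[ℂ] H) : Prop :=
  ∀ x : H, (⟪A x, x⟫).im = 0 ∧ 0 ≤ (⟪A x, x⟫).re

/-- `sm(ρ,z₀)`: the set of global minimizers of
`F_ρ(x) = [Tx,Tx]_K + ρ·[Vx−z₀,Vx−z₀]_E` over `H`. -/
def smSet (JK : K →L[ℂ] K) (JE : E →L[ℂ] E) (T : H →L[ℂ] K) (V : H →L[ℂ] E) (ρ : ℝ)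
    (z₀ : E) : Set H :=
  {xt : H | ∀ x : H,
    (⟪JK (T xt), T xt⟫).re + ρ * (⟪JE (V xt - z₀), V xt - z₀⟫).re ≤
      (⟪JK (T x), T x⟫).re + ρ * (⟪JE (V x - z₀), V x - z₀⟫).re}

/-- `sp(w₀)`: the set of minimizers of `x ↦ [Tx,Tx]_K` subject to `Vx = w₀`. -/
def spSet (JK : K →L[ℂ] K) (T : H →L[ℂ] K) (V : H →L[ℂ] E) (w₀ : E) : Set H :=
  {xt : H | V xt = w₀ ∧ ∀ x : H, V x = w₀ →
    (⟪JK (T xt), T xt⟫).re ≤ (⟪JK (T x), T x⟫).re}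

/-- `R(L)^[⊥]`: the `[·,·]_ρ`-orthogonal companion of the range of `L = (T,V)`. -/
def RLperp (JK : K →L[ℂ] K) (JE : E →L[ℂ] E) (T : H →L[ℂ] K) (V : H →L[ℂ] E) (ρ : ℝ) :
    Set (K × E) :=
  {p : K × E | ∀ x : H, ⟪JK (T x), p.1⟫ + (ρ : ℂ) * ⟪JE (V x), p.2⟫ = 0}

/-- `N₀ = ker V ∩ ((T^#T)(ker V))^⊥`. -/
def N0 (JK : K →L[ℂ] K) (T : H →L[ℂ] K) (V : H →L[ℂ] E) : Submodule ℂ H :=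
  LinearMap.ker (V : H →ₗ[ℂ] E) ⊓
    (Submodule.map (((ContinuousLinearMap.adjoint T) ∘L JK ∘L T : H →L[ℂ] H) : H →ₗ[ℂ] H)
      (LinearMap.ker (V : H →ₗ[ℂ] E)))ᗮ

/-!
The operator `G = smOp = L^#L` is positive, hence `G = S*S`. On `ker V` the form `[T·,T·]_K`
agrees with `⟨G·,·⟩` and is nonnegative, so any `x` with `Vx = z₀` and `Gx ⊥ ker V` minimises
`[Tx,Tx]_K` on `{Vx = z₀}`. With `M = ker V + ker G`, a point `x ∈ x₀ + M` with `Gx ⊥ M` comes from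
projecting `Sx₀` onto the closure of `S(M)`, provided `G(M)` is closed; moving it along `ker G`
restores `Vx = z₀`. `G(M)` is closed because `M` is closed and `range G = L^#(R(L) + R(L)^[⊥])`
is closed, by pseudo-regularity and the closed range of `L^#`. `M` is closed because `V(ker G)`
is: as `T` is onto, `T*` is bounded below, which bounds the `K`-part of `ker L^#` by its `E`-part.
-/

open scoped InnerProduct

section ClosedRange

variable {𝕜 X Y : Type*} [NontriviallyNormedField 𝕜]
  [NormedAddCommGroup X] [NormedSpace 𝕜 X] [CompleteSpace X]
  [NormedAddCommGroup Y] [NormedSpace 𝕜 Y] [CompleteSpace Y]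

theorem ContinuousLinearMap.isClosed_image_of_ker_le (f : X →L[𝕜] Y)
    (hf : IsClosed (Set.range f)) {M : Submodule 𝕜 X} (hM : IsClosed (M : Set X))
    (hker : f.ker ≤ M) : IsClosed (f '' M) := by
  have hR : IsClosed (f.range : Set Y) := by rwa [LinearMap.coe_range]
  have : CompleteSpace f.range := hR.completeSpace_coe
  set g : X →L[𝕜] f.range := f.rangeRestrict
  have hg : Function.Surjective g := f.surjective_rangeRestrict
  have hpre : g ⁻¹' (g '' M) = M := by
    refine Set.Subset.antisymm (fun x ⟨a, ha, hax⟩ => ?_) (Set.subset_preimage_image _ _)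
    have : a - x ∈ f.ker := by
      rw [LinearMap.mem_ker, ContinuousLinearMap.coe_coe, map_sub]
      exact sub_eq_zero.mpr (congrArg Subtype.val hax)
    simpa using M.sub_mem ha (hker this)
  have hgM : IsClosed (g '' M) := (g.isQuotientMap hg).isClosed_preimage.mp (by rwa [hpre])
  have : f '' M = Subtype.val '' (g '' M) := by rw [Set.image_image]; rfl
  rw [this]
  exact hR.isClosedEmbedding_subtypeVal.isClosedMap _ hgM

theorem isClosed_image_snd_of_norm_fst_le {M : Submodule 𝕜 (X × Y)}
    (hM : IsClosed (M : Set (X × Y))) {C : ℝ} (hC : ∀ p ∈ M, ‖p.1‖ ≤ C * ‖p.2‖) :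
    IsClosed (Prod.snd '' (M : Set (X × Y))) := by
  have : CompleteSpace M := hM.completeSpace_coe
  set π : M →L[𝕜] Y := ContinuousLinearMap.snd 𝕜 X Y ∘L M.subtypeL
  have hπ : AntilipschitzWith (C.toNNReal + 1) π := by
    refine π.antilipschitz_of_bound fun p => ?_
    have h1 : ‖(p : X × Y).1‖ ≤ (C.toNNReal + 1 : NNReal) * ‖(p : X × Y).2‖ := by
      push_cast
      nlinarith [hC p p.2, Real.le_coe_toNNReal C, norm_nonneg (p : X × Y).2]
    have h2 : ‖(p : X × Y).2‖ ≤ (C.toNNReal + 1 : NNReal) * ‖(p : X × Y).2‖ := by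
      push_cast
      nlinarith [C.toNNReal.coe_nonneg, norm_nonneg (p : X × Y).2]
    simpa [π, Prod.norm_def] using And.intro h1 h2
  have : Prod.snd '' (M : Set (X × Y)) = Set.range π := by
    ext y; simp [π]
  rw [this]
  exact hπ.isClosed_range π.uniformContinuous

end ClosedRange

section Adjoint

variable {𝕜 H₁ H₂ : Type*} [RCLike 𝕜]
  [NormedAddCommGroup H₁] [InnerProductSpace 𝕜 H₁] [CompleteSpace H₁]
  [NormedAddCommGroup H₂] [InnerProductSpace 𝕜 H₂] [CompleteSpace H₂]

namespace ContinuousLinearMap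

theorem exists_norm_le_mul_norm_adjoint (f : H₁ →L[𝕜] H₂) (hf : IsClosed (Set.range f)) :
    ∃ C > 0, ∀ y ∈ f.range, ‖y‖ ≤ C * ‖(f†) y‖ := by
  have hR : IsClosed (f.range : Set H₂) := by rwa [LinearMap.coe_range]
  have : CompleteSpace f.range := hR.completeSpace_coe
  obtain ⟨C, hC0, hC⟩ := f.rangeRestrict.exists_preimage_norm_le f.surjective_rangeRestrict
  refine ⟨C, hC0, fun y hy => ?_⟩
  obtain ⟨x, hxy, hx⟩ := hC ⟨y, hy⟩
  replace hxy : f x = y := congrArg Subtype.val hxy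
  have hsq : ‖y‖ ^ 2 ≤ ‖(f†) y‖ * (C * ‖y‖) := calc
    ‖y‖ ^ 2 = RCLike.re (inner 𝕜 ((f†) y) x) := by
      rw [adjoint_inner_left, hxy, inner_self_eq_norm_sq]
    _ ≤ ‖(f†) y‖ * ‖x‖ := (RCLike.re_le_norm _).trans (norm_inner_le_norm _ _)
    _ ≤ ‖(f†) y‖ * (C * ‖y‖) := by gcongr; exact hx
  rcases (norm_nonneg y).eq_or_lt with h0 | h0
  · rw [← h0]; positivity
  · nlinarith

theorem isClosed_range_adjoint (f : H₁ →L[𝕜] H₂) (hf : IsClosed (Set.range f)) :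
    IsClosed (Set.range (f†)) := by
  have hR : IsClosed (f.range : Set H₂) := by rwa [LinearMap.coe_range]
  have : CompleteSpace f.range := hR.completeSpace_coe
  obtain ⟨C, -, hC⟩ := f.exists_norm_le_mul_norm_adjoint hf
  have hanti : AntilipschitzWith C.toNNReal (f† ∘L f.range.subtypeL) :=
    (f† ∘L f.range.subtypeL).antilipschitz_of_bound fun y =>
      (hC y y.2).trans (mul_le_mul_of_nonneg_right C.le_coe_toNNReal (norm_nonneg _))
  have hrange : Set.range (f†) = Set.range (f† ∘L f.range.subtypeL) := by
    refine Set.Subset.antisymm (fun _ ⟨y, hy⟩ => ⟨f.range.orthogonalProjectionOnto y, ?_⟩)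
      (by rintro _ ⟨y, rfl⟩; exact ⟨y, rfl⟩)
    have hker := f.orthogonal_range ▸ f.range.sub_starProjection_mem_orthogonal y
    rw [LinearMap.mem_ker, coe_coe, map_sub, sub_eq_zero, Submodule.starProjection_apply] at hker
    rw [← hy, comp_apply, Submodule.subtypeL_apply, hker]
  rw [hrange]
  exact hanti.isClosed_range (f† ∘L f.range.subtypeL).uniformContinuous

theorem exists_mem_inner_adjoint_comp_self_sub_eq_zero (S : H₁ →L[𝕜] H₂) (M : Submodule 𝕜 H₁)
    (hM : IsClosed ((S† ∘L S) '' M)) (x₀ : H₁) :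
    ∃ ξ ∈ M, ∀ η ∈ M, inner 𝕜 ((S† ∘L S) (x₀ - ξ)) η = 0 := by
  set N := (M.map (S : H₁ →ₗ[𝕜] H₂)).topologicalClosure
  set p := N.starProjection (S x₀)
  have hp : (S†) p ∈ closure ((S† ∘L S) '' M) := by
    have hpN : p ∈ closure (S '' M) := by
      have := N.starProjection_apply_mem (S x₀)
      rwa [← SetLike.mem_coe, Submodule.topologicalClosure_coe, Submodule.map_coe] at this
    rw [coe_comp, Set.image_comp]
    exact image_closure_subset_closure_image (S†).continuous ⟨p, hpN, rfl⟩
  rw [hM.closure_eq] at hp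
  obtain ⟨ξ, hξ, hξp⟩ := hp
  refine ⟨ξ, hξ, fun η hη => ?_⟩
  rw [map_sub, hξp, comp_apply, ← map_sub, adjoint_inner_left]
  exact Submodule.inner_left_of_mem_orthogonal
    ((M.map (S : H₁ →ₗ[𝕜] H₂)).le_topologicalClosure (Submodule.mem_map_of_mem hη))
    (N.sub_starProjection_mem_orthogonal _)

end ContinuousLinearMap

end Adjoint

theorem LinearMap.IsSymmetric.re_inner_map_add {𝕜 F : Type*} [RCLike 𝕜] [NormedAddCommGroup F]
    [InnerProductSpace 𝕜 F] {A : F →ₗ[𝕜] F} (hA : A.IsSymmetric) (x y : F) :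
    RCLike.re (inner 𝕜 (A (x + y)) (x + y)) =
      RCLike.re (inner 𝕜 (A x) x) + 2 * RCLike.re (inner 𝕜 (A x) y) +
        RCLike.re (inner 𝕜 (A y) y) := by
  have hyx : inner 𝕜 (A y) x = starRingEnd 𝕜 (inner 𝕜 (A x) y) := by
    rw [hA, inner_conj_symm]
  simp only [map_add, inner_add_left, inner_add_right, hyx, RCLike.conj_re]
  ring

section Krein

variable (JK : K →L[ℂ] K) (JE : E →L[ℂ] E) (T : H →L[ℂ] K) (V : H →L[ℂ] E) (ρ : ℝ)

/-- `L^#(y, z) = T* J_K y + ρ V* J_E z`, the adjoint of `L = (T, V) : H → (K × E, [·,·]_ρ)`. -/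
def kreinAdjoint : K × E →L[ℂ] H :=
  (T† ∘L JK).coprod ((ρ : ℂ) • (V† ∘L JE))

theorem smOp_eq_kreinAdjoint_comp :
    smOp JK JE T V ρ = kreinAdjoint JK JE T V ρ ∘L T.prod V := by
  ext x
  simp [smOp, kreinAdjoint]

theorem inner_smOp_apply (x y : H) :
    ⟪smOp JK JE T V ρ x, y⟫ = ⟪JK (T x), T y⟫ + ρ * ⟪JE (V x), V y⟫ := by
  simp [smOp, ContinuousLinearMap.adjoint_inner_left]

theorem smOp_isPositive (hJKsa : IsSelfAdjoint JK) (hJEsa : IsSelfAdjoint JE)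
    (hnn : ∀ x : H, 0 ≤ (⟪JK (T x), T x⟫).re + ρ * (⟪JE (V x), V x⟫).re) :
    (smOp JK JE T V ρ).IsPositive := by
  refine ContinuousLinearMap.isPositive_def'.mpr ⟨?_, fun x => ?_⟩
  · exact (hJKsa.adjoint_conj T).add
      (IsSelfAdjoint.smul (Complex.conj_ofReal ρ) (hJEsa.adjoint_conj V))
  · simpa [ContinuousLinearMap.reApplyInnerSelf, inner_smOp_apply] using hnn x

theorem coe_ker_kreinAdjoint (hJKsa : IsSelfAdjoint JK) (hJEsa : IsSelfAdjoint JE) :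
    ((kreinAdjoint JK JE T V ρ).ker : Set (K × E)) = RLperp JK JE T V ρ := by
  have hinner : ∀ (x : H) (p : K × E), ⟪x, kreinAdjoint JK JE T V ρ p⟫ =
      ⟪JK (T x), p.1⟫ + ρ * ⟪JE (V x), p.2⟫ := by
    intro x p
    simp only [kreinAdjoint, ContinuousLinearMap.coprod_apply, ContinuousLinearMap.comp_apply,
      smul_apply, inner_add_right, inner_smul_right, ContinuousLinearMap.adjoint_inner_right]
    rw [← ContinuousLinearMap.coe_coe JK, ← hJKsa.isSymmetric, ← ContinuousLinearMap.coe_coe JE,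
      ← hJEsa.isSymmetric]
  ext p
  simp only [SetLike.mem_coe, LinearMap.mem_ker, ContinuousLinearMap.coe_coe, RLperp,
    Set.mem_ofPred_eq, ← hinner]
  exact ⟨fun hp x => by rw [hp, inner_zero_right], fun hp => ext_inner_left ℂ fun x => by
    rw [hp, inner_zero_right]⟩

theorem isClosed_range_kreinAdjoint (hJK2 : JK ∘L JK = 1) (hJE2 : JE ∘L JE = 1) (hρ : ρ ≠ 0)
    (hclosedR : IsClosed (Set.range (fun x : H => (T x, V x)))) :
    IsClosed (Set.range (kreinAdjoint JK JE T V ρ)) := by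
  set e := WithLp.prodContinuousLinearEquiv 2 ℂ K E
  set L : H →L[ℂ] WithLp 2 (K × E) := e.symm.toContinuousLinearMap ∘L T.prod V
  have hL : IsClosed (Set.range L) := by
    have : Set.range L = e ⁻¹' Set.range (fun x : H => (T x, V x)) := by
      ext w
      simp only [L, Set.mem_range, Set.mem_preimage, ContinuousLinearMap.comp_apply,
        ContinuousLinearMap.prod_apply, ContinuousLinearEquiv.coe_coe, e.symm_apply_eq]
    rw [this]
    exact hclosedR.preimage e.continuous
  set J : K × E →L[ℂ] WithLp 2 (K × E) :=
    e.symm.toContinuousLinearMap ∘L JK.prodMap ((ρ : ℂ) • JE)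
  have hfactor : kreinAdjoint JK JE T V ρ = L† ∘L J := by
    refine ContinuousLinearMap.ext fun p => ext_inner_right ℂ fun x => ?_
    simp only [kreinAdjoint, L, J, e, ContinuousLinearMap.coprod_apply,
      ContinuousLinearMap.comp_apply, smul_apply, ContinuousLinearMap.coe_prodMap',
      ContinuousLinearEquiv.coe_coe, WithLp.prodContinuousLinearEquiv_symm_apply,
      ContinuousLinearMap.prod_apply, WithLp.prod_inner_apply, Prod.map_fst, Prod.map_snd,
      inner_add_left, inner_smul_left, ContinuousLinearMap.adjoint_inner_left]
  have hJ : Function.Surjective J := by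
    intro w
    refine ⟨(JK (e w).1, (ρ : ℂ)⁻¹ • JE (e w).2), ?_⟩
    have hK : JK (JK (e w).1) = (e w).1 := congrArg (· (e w).1) hJK2
    have hE : JE (JE (e w).2) = (e w).2 := congrArg (· (e w).2) hJE2
    show e.symm (JK (JK (e w).1), (ρ : ℂ) • JE ((ρ : ℂ)⁻¹ • JE (e w).2)) = w
    rw [map_smul, smul_smul, mul_inv_cancel₀ (Complex.ofReal_ne_zero.mpr hρ), one_smul, hK, hE,
      Prod.mk.eta, e.symm_apply_apply]
  rw [hfactor, ContinuousLinearMap.coe_comp, hJ.range_comp]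
  exact L.isClosed_range_adjoint hL

theorem isClosed_range_smOp (hJKsa : IsSelfAdjoint JK) (hJK2 : JK ∘L JK = 1)
    (hJEsa : IsSelfAdjoint JE) (hJE2 : JE ∘L JE = 1) (hρ : ρ ≠ 0)
    (hclosedR : IsClosed (Set.range (fun x : H => (T x, V x))))
    (hpr : IsClosed (Set.range (fun x : H => (T x, V x)) + RLperp JK JE T V ρ)) :
    IsClosed (Set.range (smOp JK JE T V ρ)) := by
  set Φ := kreinAdjoint JK JE T V ρ
  have hsum : (((T.prod V).range ⊔ Φ.ker : Submodule ℂ (K × E)) : Set (K × E)) =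
      Set.range (fun x : H => (T x, V x)) + RLperp JK JE T V ρ := by
    rw [Submodule.coe_sup, coe_ker_kreinAdjoint JK JE T V ρ hJKsa hJEsa, LinearMap.coe_range]
    rfl
  have hrange : Set.range (smOp JK JE T V ρ) = Φ '' ((T.prod V).range ⊔ Φ.ker : Submodule ℂ _) := by
    rw [smOp_eq_kreinAdjoint_comp]
    ext y
    constructor
    · rintro ⟨x, rfl⟩
      exact ⟨T.prod V x, Submodule.mem_sup_left ⟨x, rfl⟩, rfl⟩
    · rintro ⟨_, hp, rfl⟩
      obtain ⟨_, ⟨x, rfl⟩, k, hk, rfl⟩ := Submodule.mem_sup.mp hp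
      exact ⟨x, by rw [map_add, show Φ k = 0 from hk, add_zero]; rfl⟩
  rw [hrange]
  exact Φ.isClosed_image_of_ker_le (isClosed_range_kreinAdjoint JK JE T V ρ hJK2 hJE2 hρ hclosedR)
    (hsum ▸ hpr) le_sup_right

theorem isClosed_image_ker_smOp (hJK2 : JK ∘L JK = 1) (hT : Function.Surjective T)
    (hclosedR : IsClosed (Set.range (fun x : H => (T x, V x)))) :
    IsClosed (V '' (smOp JK JE T V ρ).ker) := by
  set Φ := kreinAdjoint JK JE T V ρ
  obtain ⟨C, hC0, hC⟩ := T.exists_norm_le_mul_norm_adjoint (by simp [hT.range_eq])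
  have hbound : ∀ p ∈ Φ.ker, ‖p.1‖ ≤ ‖JK‖ * C * ‖(ρ : ℂ) • (V† ∘L JE)‖ * ‖p.2‖ := by
    intro p hp
    have hΦ : (T†) (JK p.1) = -(((ρ : ℂ) • (V† ∘L JE)) p.2) :=
      eq_neg_of_add_eq_zero_left (LinearMap.mem_ker.mp hp)
    calc ‖p.1‖ = ‖JK (JK p.1)‖ := by rw [← ContinuousLinearMap.comp_apply, hJK2]; rfl
      _ ≤ ‖JK‖ * ‖JK p.1‖ := JK.le_opNorm _
      _ ≤ ‖JK‖ * (C * ‖(T†) (JK p.1)‖) := by gcongr; exact hC _ (hT _)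
      _ ≤ ‖JK‖ * (C * (‖(ρ : ℂ) • (V† ∘L JE)‖ * ‖p.2‖)) := by
        rw [hΦ, norm_neg]; gcongr; exact ContinuousLinearMap.le_opNorm _ _
      _ = _ := by ring
  have hM : IsClosed (((T.prod V).range ⊓ Φ.ker : Submodule ℂ (K × E)) : Set (K × E)) := by
    rw [Submodule.coe_inf, LinearMap.coe_range]
    exact hclosedR.inter Φ.isClosed_ker
  have himage : V '' (smOp JK JE T V ρ).ker =
      Prod.snd '' (((T.prod V).range ⊓ Φ.ker : Submodule ℂ (K × E)) : Set (K × E)) := by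
    ext z
    simp only [smOp_eq_kreinAdjoint_comp, Φ, Set.mem_image, SetLike.mem_coe, LinearMap.mem_ker]
    constructor
    · rintro ⟨x, hx, rfl⟩
      exact ⟨(T x, V x), ⟨⟨x, rfl⟩, hx⟩, rfl⟩
    · rintro ⟨_, ⟨⟨x, rfl⟩, hx⟩, rfl⟩
      exact ⟨x, hx, rfl⟩
  rw [himage]
  exact isClosed_image_snd_of_norm_fst_le hM fun p hp => hbound p hp.2

omit [CompleteSpace H] [CompleteSpace E] in
theorem mem_spSet_of_forall_inner_eq_zero (hJKsa : IsSelfAdjoint JK)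
    (hpos : ∀ n, V n = 0 → 0 ≤ (⟪JK (T n), T n⟫).re) {x : H}
    (hx : ∀ n, V n = 0 → ⟪JK (T x), T n⟫ = 0) : x ∈ spSet JK T V (V x) := by
  refine ⟨rfl, fun x' hx' => ?_⟩
  have hn : V (x' - x) = 0 := by rw [map_sub, hx', sub_self]
  have hexp := hJKsa.isSymmetric.re_inner_map_add (T x) (T (x' - x))
  rw [← map_add, add_sub_cancel] at hexp
  simp only [ContinuousLinearMap.coe_coe, RCLike.re_to_complex, hx _ hn, Complex.zero_re] at hexp
  linarith [hpos _ hn]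

end Krein

theorem stmt16
    (JK : K →L[ℂ] K) (hJKsa : IsSelfAdjoint JK) (hJK2 : JK ∘L JK = 1)
    (JE : E →L[ℂ] E) (hJEsa : IsSelfAdjoint JE) (hJE2 : JE ∘L JE = 1)
    (T : H →L[ℂ] K) (V : H →L[ℂ] E)
    (hT : Function.Surjective T) (hV : Function.Surjective V)
    (ρ : ℝ) (hρ : ρ ≠ 0)
    (hclosedR : IsClosed (Set.range (fun x : H => (T x, V x))))
    (hnn : ∀ x : H, 0 ≤ (⟪JK (T x), T x⟫).re + ρ * (⟪JE (V x), V x⟫).re)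
    (hpr : IsClosed (Set.range (fun x : H => (T x, V x)) + RLperp JK JE T V ρ)) :
    ∀ z₀ : E, (spSet JK T V z₀).Nonempty := by
  intro z₀
  set G := smOp JK JE T V ρ
  obtain ⟨S, hS⟩ : ∃ S : H →L[ℂ] H, G = S† ∘L S := CStarAlgebra.nonneg_iff_eq_star_mul_self.mp
    ((G.nonneg_iff_isPositive).mpr (smOp_isPositive JK JE T V ρ hJKsa hJEsa hnn))
  -- `M = ker V + ker G`
  set M := ((G.ker).map (V : H →ₗ[ℂ] E)).comap (V : H →ₗ[ℂ] E)
  have hM : IsClosed (M : Set H) :=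
    (isClosed_image_ker_smOp JK JE T V ρ hJK2 hT hclosedR).preimage V.continuous
  have hGM : IsClosed (G '' M) :=
    G.isClosed_image_of_ker_le (isClosed_range_smOp JK JE T V ρ hJKsa hJK2 hJEsa hJE2 hρ
      hclosedR hpr) hM fun x hx => Submodule.mem_map_of_mem hx
  obtain ⟨x₀, rfl⟩ := hV z₀
  obtain ⟨ξ, ⟨g, hg, hgξ⟩, horth⟩ := S.exists_mem_inner_adjoint_comp_self_sub_eq_zero M
    (hS ▸ hGM) x₀
  have hVx : V (x₀ - ξ + g) = V x₀ := by
    rw [ContinuousLinearMap.coe_coe] at hgξ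
    rw [map_add, map_sub, hgξ, sub_add_cancel]
  rw [← hVx]
  refine ⟨_, mem_spSet_of_forall_inner_eq_zero JK T V hJKsa (fun n hn => ?_) fun n hn => ?_⟩
  · simpa [hn] using hnn n
  · have hGx : G (x₀ - ξ + g) = G (x₀ - ξ) := by rw [map_add, show G g = 0 from hg, add_zero]
    have := horth n (by simp [M, hn])
    rwa [← hS, ← hGx, inner_smOp_apply, hn, inner_zero_right, mul_zero, add_zero] at this
end
end

section
/- Let ρ ∈ ℝ, ρ ≠ 0, and assume [Tx,Tx]_K + ρ·[Vx,Vx]_E ≥ 0 for every x ∈ H (i.e. R(L) is nonnegative with respect to [·,·]_ρ). If z₀ ∈ E is such that sm(ρ,z₀) ≠ ∅, then there exists w₀ ∈ E such that sp(w₀) ≠ ∅ and sp(w₀) ⊆ sm(ρ,z₀). (In fact, w₀ := Vx₀ works for any x₀ ∈ sm(ρ,z₀).) -/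
open scoped ComplexInnerProductSpace Pointwise

noncomputable section

variable {H K E : Type*}
  [NormedAddCommGroup H] [InnerProductSpace ℂ H] [CompleteSpace H]
  [NormedAddCommGroup K] [InnerProductSpace ℂ K] [CompleteSpace K]
  [NormedAddCommGroup E] [InnerProductSpace ℂ E] [CompleteSpace E]

/-! On the fibre `V⁻¹{V x₀}` the penalty `ρ·[Vx−z₀,Vx−z₀]_E` is constant, so there a global
minimizer `x₀` of `F_ρ` minimizes `[Tx,Tx]_K`, and any other minimizer of `[Tx,Tx]_K` on that fibre
attains the same value `F_ρ(x₀)`, hence is a global minimizer of `F_ρ` as well. -/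

open Set

namespace IsMinOn

variable {α β : Type*} {f : α → ℝ} {g : β → ℝ} {V : α → β} {x₀ x : α}

theorem fiber_of_add_comp (h : IsMinOn (f + g ∘ V) univ x₀) :
    IsMinOn f (V ⁻¹' {V x₀}) x₀ := by
  intro x hx
  have hVx : V x = V x₀ := hx
  simpa [hVx] using h (mem_univ x)

theorem add_comp_of_fiber (h₀ : IsMinOn (f + g ∘ V) univ x₀)
    (h : IsMinOn f (V ⁻¹' {V x₀}) x) (hVx : V x = V x₀) :
    IsMinOn (f + g ∘ V) univ x := by
  intro y _
  have hfx : f x ≤ f x₀ := h rfl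
  have hx₀y : f x₀ + g (V x₀) ≤ f y + g (V y) := h₀ (mem_univ y)
  show f x + g (V x) ≤ f y + g (V y)
  rw [hVx]
  linarith

end IsMinOn

section Minimizers

variable {H' K' E' : Type*}
  [NormedAddCommGroup H'] [InnerProductSpace ℂ H']
  [NormedAddCommGroup K'] [InnerProductSpace ℂ K']
  [NormedAddCommGroup E'] [InnerProductSpace ℂ E']

theorem mem_smSet_iff {JK : K' →L[ℂ] K'} {JE : E' →L[ℂ] E'} {T : H' →L[ℂ] K'} {V : H' →L[ℂ] E'}
    {ρ : ℝ} {z₀ : E'} {xt : H'} :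
    xt ∈ smSet JK JE T V ρ z₀ ↔
      IsMinOn ((fun x => (⟪JK (T x), T x⟫).re) + (fun z => ρ * (⟪JE (z - z₀), z - z₀⟫).re) ∘ V)
        univ xt := by
  rw [isMinOn_univ_iff]
  rfl

theorem mem_spSet_iff {JK : K' →L[ℂ] K'} {T : H' →L[ℂ] K'} {V : H' →L[ℂ] E'} {w₀ : E'} {xt : H'} :
    xt ∈ spSet JK T V w₀ ↔
      V xt = w₀ ∧ IsMinOn (fun x => (⟪JK (T x), T x⟫).re) (V ⁻¹' {w₀}) xt :=
  and_congr_right fun _ => by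
    rw [isMinOn_iff]
    rfl

theorem spSet_nonempty_and_subset_smSet {JK : K' →L[ℂ] K'} {JE : E' →L[ℂ] E'} {T : H' →L[ℂ] K'}
    {V : H' →L[ℂ] E'} {ρ : ℝ} {z₀ : E'} {x₀ : H'} (hx₀ : x₀ ∈ smSet JK JE T V ρ z₀) :
    (spSet JK T V (V x₀)).Nonempty ∧ spSet JK T V (V x₀) ⊆ smSet JK JE T V ρ z₀ := by
  rw [mem_smSet_iff] at hx₀
  refine ⟨⟨x₀, mem_spSet_iff.2 ⟨rfl, hx₀.fiber_of_add_comp⟩⟩, fun x hx => ?_⟩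
  obtain ⟨hVx, hmin⟩ := mem_spSet_iff.1 hx
  exact mem_smSet_iff.2 (hx₀.add_comp_of_fiber hmin hVx)

end Minimizers

theorem stmt17_general
    (JK : K →L[ℂ] K)
    (JE : E →L[ℂ] E)
    (T : H →L[ℂ] K) (V : H →L[ℂ] E)
    (ρ : ℝ)
    (z₀ : E) (hz : (smSet JK JE T V ρ z₀).Nonempty) :
    (∃ w₀ : E, (spSet JK T V w₀).Nonempty ∧
      spSet JK T V w₀ ⊆ smSet JK JE T V ρ z₀) ∧
    (∀ x₀ ∈ smSet JK JE T V ρ z₀,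
      (spSet JK T V (V x₀)).Nonempty ∧
        spSet JK T V (V x₀) ⊆ smSet JK JE T V ρ z₀) := by
  obtain ⟨x₀, hx₀⟩ := hz
  exact ⟨⟨V x₀, spSet_nonempty_and_subset_smSet hx₀⟩, fun _ => spSet_nonempty_and_subset_smSet⟩

theorem stmt17
    (JK : K →L[ℂ] K) (hJKsa : IsSelfAdjoint JK) (hJK2 : JK ∘L JK = 1)
    (JE : E →L[ℂ] E) (hJEsa : IsSelfAdjoint JE) (hJE2 : JE ∘L JE = 1)
    (T : H →L[ℂ] K) (V : H →L[ℂ] E)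
    (hT : Function.Surjective T) (hV : Function.Surjective V)
    (ρ : ℝ) (hρ : ρ ≠ 0)
    (hnn : ∀ x : H, 0 ≤ (⟪JK (T x), T x⟫).re + ρ * (⟪JE (V x), V x⟫).re)
    (z₀ : E) (hz : (smSet JK JE T V ρ z₀).Nonempty) :
    (∃ w₀ : E, (spSet JK T V w₀).Nonempty ∧
      spSet JK T V w₀ ⊆ smSet JK JE T V ρ z₀) ∧
    (∀ x₀ ∈ smSet JK JE T V ρ z₀,
      (spSet JK T V (V x₀)).Nonempty ∧
        spSet JK T V (V x₀) ⊆ smSet JK JE T V ρ z₀) :=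
  stmt17_general JK JE T V ρ z₀ hz
end
end

section
/- Let ρ ∈ ℝ, ρ ≠ 0, and assume [Tx,Tx]_K + ρ·[Vx,Vx]_E ≥ 0 for every x ∈ H (i.e. R(L) is nonnegative with respect to [·,·]_ρ). If w₀ ∈ E is such that sp(w₀) ≠ ∅, then there exists z₀ ∈ E such that sp(w₀) ⊆ sm(ρ,z₀). -/
open scoped ComplexInnerProductSpace Pointwise

noncomputable section

variable {H K E : Type*}
  [NormedAddCommGroup H] [InnerProductSpace ℂ H] [CompleteSpace H]
  [NormedAddCommGroup K] [InnerProductSpace ℂ K] [CompleteSpace K]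
  [NormedAddCommGroup E] [InnerProductSpace ℂ E] [CompleteSpace E]

/-!
Fix `x₀ ∈ sp(w₀)`. Minimality of `[Tx,Tx]_K` along `x₀ + ker V` forces `T* J_K T x₀ ⊥ ker V`.
As `V` is onto, `V*` is bounded below (open mapping), so its range is closed and equals
`(ker V)ᗮ`: thus `T* J_K T x₀ = V* e`. For `z₀ = w₀ + ρ⁻¹ J_E e` the first variation of `F_ρ`
at `x₀` vanishes, so `F_ρ(x₀ + h) = F_ρ(x₀) + [Th,Th]_K + ρ [Vh,Vh]_E ≥ F_ρ(x₀)`. Every point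
of `sp(w₀)` has the same `Vx` and `[Tx,Tx]_K` as `x₀`, hence the same value of `F_ρ`.
-/

section InnerProductSpace

open RCLike ContinuousLinearMap
open scoped InnerProductSpace ComplexConjugate

variable {𝕜 F G : Type*} [RCLike 𝕜]
  [NormedAddCommGroup F] [InnerProductSpace 𝕜 F]
  [NormedAddCommGroup G] [InnerProductSpace 𝕜 G]

theorem ContinuousLinearMap.re_inner_map_smul_self (J : F →L[𝕜] F) (t : 𝕜) (b : F) :
    re ⟪J (t • b), t • b⟫_𝕜 = ‖t‖ ^ 2 * re ⟪J b, b⟫_𝕜 := by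
  rw [map_smul, inner_smul_left, inner_smul_right, ← mul_assoc, RCLike.conj_mul, ← ofReal_pow,
    re_ofReal_mul]

variable [CompleteSpace F]

theorem IsSelfAdjoint.re_inner_map_add_add_self {J : F →L[𝕜] F} (hJ : IsSelfAdjoint J) (a b : F) :
    re ⟪J (a + b), a + b⟫_𝕜 = re ⟪J a, a⟫_𝕜 + 2 * re ⟪J a, b⟫_𝕜 + re ⟪J b, b⟫_𝕜 := by
  have hba : re ⟪J b, a⟫_𝕜 = re ⟪J a, b⟫_𝕜 := by
    rw [← adjoint_inner_right, hJ.adjoint_eq, inner_re_symm]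
  simp only [map_add, inner_add_left, inner_add_right, hba]
  ring

theorem IsSelfAdjoint.inner_map_eq_zero_of_forall_le {J : F →L[𝕜] F} (hJ : IsSelfAdjoint J)
    {a b : F} (h : ∀ t : 𝕜, re ⟪J a, a⟫_𝕜 ≤ re ⟪J (a + t • b), a + t • b⟫_𝕜) :
    ⟪J a, b⟫_𝕜 = 0 := by
  set c := ⟪J a, b⟫_𝕜
  -- Along `t = s * conj c`, `s : ℝ`, the hypothesis is a nonnegative real quadratic in `s`
  -- with discriminant `4 * ‖c‖ ^ 4`.
  have hquad : ∀ s : ℝ, 0 ≤ (‖c‖ ^ 2 * re ⟪J b, b⟫_𝕜) * (s * s) + 2 * ‖c‖ ^ 2 * s + 0 := by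
    intro s
    have hs := h ((s : 𝕜) * conj c)
    rw [hJ.re_inner_map_add_add_self, re_inner_map_smul_self, inner_smul_right, mul_assoc,
      RCLike.conj_mul, ← ofReal_pow, ← ofReal_mul, ofReal_re, norm_mul, norm_conj, norm_ofReal,
      mul_pow, sq_abs] at hs
    linarith
  have hdisc := discrim_le_zero hquad
  rw [discrim] at hdisc
  exact norm_eq_zero.mp <| pow_eq_zero_iff two_ne_zero |>.mp <| by nlinarith [sq_nonneg (‖c‖ ^ 2)]

variable [CompleteSpace G]

theorem ContinuousLinearMap.antilipschitz_adjoint_of_surjective {V : F →L[𝕜] G}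
    (hV : Function.Surjective V) : ∃ C, AntilipschitzWith C (adjoint V) := by
  obtain ⟨C, hC, hpre⟩ := V.exists_preimage_norm_le hV
  refine ⟨C.toNNReal, (adjoint V).antilipschitz_of_bound fun z => ?_⟩
  obtain ⟨x, rfl, hx⟩ := hpre z
  rw [Real.coe_toNNReal C hC.le]
  rcases (norm_nonneg (V x)).eq_or_lt with h0 | hpos
  · rw [← h0]
    positivity
  refine le_of_mul_le_mul_left ?_ hpos
  calc ‖V x‖ * ‖V x‖ = re ⟪x, adjoint V (V x)⟫_𝕜 := by
        rw [adjoint_inner_right, inner_self_eq_norm_sq, sq]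
    _ ≤ ‖x‖ * ‖adjoint V (V x)‖ := re_inner_le_norm _ _
    _ ≤ (C * ‖V x‖) * ‖adjoint V (V x)‖ := by gcongr
    _ = ‖V x‖ * (C * ‖adjoint V (V x)‖) := by ring

theorem ContinuousLinearMap.orthogonal_ker_eq_range_adjoint {V : F →L[𝕜] G}
    (hV : Function.Surjective V) : (V : F →ₗ[𝕜] G).kerᗮ = (adjoint V : G →ₗ[𝕜] F).range := by
  obtain ⟨C, hC⟩ := antilipschitz_adjoint_of_surjective hV
  rw [orthogonal_ker, closed_range_of_antilipschitz hC]

end InnerProductSpace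

section KreinSpace

open ContinuousLinearMap

variable {JK : K →L[ℂ] K} {JE : E →L[ℂ] E} {T : H →L[ℂ] K} {V : H →L[ℂ] E}

omit [CompleteSpace E] in
theorem adjoint_map_mem_orthogonal_ker_of_mem_spSet (hJK : IsSelfAdjoint JK) {w₀ : E} {x₀ : H}
    (hx₀ : x₀ ∈ spSet JK T V w₀) :
    adjoint T (JK (T x₀)) ∈ (V : H →ₗ[ℂ] E).kerᗮ := by
  rw [Submodule.mem_orthogonal']
  intro n hn
  rw [adjoint_inner_left]
  refine hJK.inner_map_eq_zero_of_forall_le fun t => ?_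
  have hn : V n = 0 := hn
  have hV : V (x₀ + t • n) = w₀ := by simp [hn, hx₀.1]
  simpa only [RCLike.re_to_complex, map_add, map_smul] using hx₀.2 _ hV

theorem mem_smSet_of_gradient_eq_zero (hJK : IsSelfAdjoint JK) (hJE : IsSelfAdjoint JE) {ρ : ℝ}
    (hnn : ∀ x : H, 0 ≤ (⟪JK (T x), T x⟫).re + ρ * (⟪JE (V x), V x⟫).re) {x₀ : H} {z₀ : E}
    (hgrad : adjoint T (JK (T x₀)) + (ρ : ℂ) • adjoint V (JE (V x₀ - z₀)) = 0) :
    x₀ ∈ smSet JK JE T V ρ z₀ := by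
  intro x
  set h := x - x₀
  have hcrit : (⟪JK (T x₀), T h⟫).re + ρ * (⟪JE (V x₀ - z₀), V h⟫).re = 0 := by
    simpa [inner_add_left, inner_smul_left, adjoint_inner_left] using
      congrArg (fun g => (⟪g, h⟫).re) hgrad
  have hK : (⟪JK (T x), T x⟫).re = (⟪JK (T x₀), T x₀⟫).re + 2 * (⟪JK (T x₀), T h⟫).re
      + (⟪JK (T h), T h⟫).re := by
    rw [show T x = T x₀ + T h by simp [h]]
    exact hJK.re_inner_map_add_add_self _ _
  have hE : (⟪JE (V x - z₀), V x - z₀⟫).re = (⟪JE (V x₀ - z₀), V x₀ - z₀⟫).re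
      + 2 * (⟪JE (V x₀ - z₀), V h⟫).re + (⟪JE (V h), V h⟫).re := by
    rw [show V x - z₀ = (V x₀ - z₀) + V h by simp [h]]
    exact hJE.re_inner_map_add_add_self _ _
  rw [hK, hE]
  linarith [hnn h]

omit [CompleteSpace H] [CompleteSpace K] [CompleteSpace E] in
theorem spSet_subset_smSet_of_mem {ρ : ℝ} {w₀ z₀ : E} {x₀ : H} (hsp : x₀ ∈ spSet JK T V w₀)
    (hsm : x₀ ∈ smSet JK JE T V ρ z₀) : spSet JK T V w₀ ⊆ smSet JK JE T V ρ z₀ := by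
  intro x hx y
  have hval : (⟪JK (T x), T x⟫).re = (⟪JK (T x₀), T x₀⟫).re :=
    le_antisymm (hx.2 x₀ hsp.1) (hsp.2 x hx.1)
  rw [hval, hx.1, ← hsp.1]
  exact hsm y

end KreinSpace

theorem stmt18_general
    (JK : K →L[ℂ] K) (hJKsa : IsSelfAdjoint JK)
    (JE : E →L[ℂ] E) (hJEsa : IsSelfAdjoint JE) (hJE2 : JE ∘L JE = 1)
    (T : H →L[ℂ] K) (V : H →L[ℂ] E)
    (hV : Function.Surjective V)
    (ρ : ℝ) (hρ : ρ ≠ 0)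
    (hnn : ∀ x : H, 0 ≤ (⟪JK (T x), T x⟫).re + ρ * (⟪JE (V x), V x⟫).re)
    (w₀ : E) (hw : (spSet JK T V w₀).Nonempty) :
    ∃ z₀ : E, spSet JK T V w₀ ⊆ smSet JK JE T V ρ z₀ := by
  obtain ⟨x₀, hx₀⟩ := hw
  have hperp := adjoint_map_mem_orthogonal_ker_of_mem_spSet hJKsa hx₀
  rw [ContinuousLinearMap.orthogonal_ker_eq_range_adjoint hV] at hperp
  obtain ⟨e, he⟩ := hperp
  set z₀ := w₀ + (ρ : ℂ)⁻¹ • JE e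
  have hJE : JE (V x₀ - z₀) = -((ρ : ℂ)⁻¹ • e) := by
    rw [hx₀.1, sub_add_cancel_left, map_neg, map_smul, ← ContinuousLinearMap.comp_apply, hJE2,
      one_apply_eq_self]
  have hgrad : ContinuousLinearMap.adjoint T (JK (T x₀))
      + (ρ : ℂ) • ContinuousLinearMap.adjoint V (JE (V x₀ - z₀)) = 0 := by
    rw [hJE, map_neg, map_smul, smul_neg, smul_inv_smul₀ (by exact_mod_cast hρ)]
    exact add_neg_eq_zero.mpr he.symm
  exact ⟨z₀, spSet_subset_smSet_of_mem hx₀ (mem_smSet_of_gradient_eq_zero hJKsa hJEsa hnn hgrad)⟩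

theorem stmt18
    (JK : K →L[ℂ] K) (hJKsa : IsSelfAdjoint JK) (hJK2 : JK ∘L JK = 1)
    (JE : E →L[ℂ] E) (hJEsa : IsSelfAdjoint JE) (hJE2 : JE ∘L JE = 1)
    (T : H →L[ℂ] K) (V : H →L[ℂ] E)
    (hT : Function.Surjective T) (hV : Function.Surjective V)
    (ρ : ℝ) (hρ : ρ ≠ 0)
    (hnn : ∀ x : H, 0 ≤ (⟪JK (T x), T x⟫).re + ρ * (⟪JE (V x), V x⟫).re)
    (w₀ : E) (hw : (spSet JK T V w₀).Nonempty) :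
    ∃ z₀ : E, spSet JK T V w₀ ⊆ smSet JK JE T V ρ z₀ :=
  stmt18_general JK hJKsa JE hJEsa hJE2 T V hV ρ hρ hnn w₀ hw
end
end

section
/- Let ρ ∈ ℝ, ρ ≠ 0. Assume R(L) is a positive subspace for [·,·]_ρ, i.e. [Tx,Tx]_K + ρ·[Vx,Vx]_E > 0 whenever (Tx,Vx) ≠ (0,0), and that R(L) is nondegenerate, i.e. R(L) ∩ R(L)^[⊥] = {0}. Then: (1) for every z₀ ∈ E with sm(ρ,z₀) ≠ ∅ there exists w₀ ∈ E such that sp(w₀) = sm(ρ,z₀) and this set is nonempty; (2) for every w₀ ∈ E with sp(w₀) ≠ ∅ there exists z₀ ∈ E such that sp(w₀) = sm(ρ,z₀). -/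
open scoped ComplexInnerProductSpace Pointwise

noncomputable section

variable {H K E : Type*}
  [NormedAddCommGroup H] [InnerProductSpace ℂ H] [CompleteSpace H]
  [NormedAddCommGroup K] [InnerProductSpace ℂ K] [CompleteSpace K]
  [NormedAddCommGroup E] [InnerProductSpace ℂ E] [CompleteSpace E]

/-!
Positivity of `R(L)` makes `F_ρ(·; z₀)` a convex quadratic function whose second-order term
`[Ld, Ld]_ρ` vanishes only when `Ld = 0`. Comparing two minimizers with their midpoint therefore
shows that all points of `sm(ρ, z₀)` have the same image `w₀` under `V`; on the fibre `V⁻¹(w₀)`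
the objective differs from `[T·, T·]_K` by a constant, so `sm(ρ, z₀) = sp(w₀)`.

Conversely, if `x̃ ∈ sp(w₀)`, the first-order condition puts `T* J_K T x̃` in `(ker V)^⊥`, which
is the range of `V*` because a surjective `V` has a bounded right inverse. Writing
`T* J_K T x̃ = V* u` and `z₀ = w₀ + ρ⁻¹ J_E u` makes `x̃` a stationary point, hence a minimizer,
of `F_ρ(·; z₀)`, and the first part applies.
-/

set_option linter.unusedSectionVars false

open scoped InnerProductSpace

open ContinuousLinearMap

theorem eq_zero_of_forall_two_mul_mul_add_sq_mul_nonneg {b c : ℝ}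
    (h : ∀ t : ℝ, 0 ≤ 2 * t * b + t ^ 2 * c) : b = 0 := by
  have hdisc := discrim_le_zero (a := c) (b := 2 * b) (c := 0) fun t => by linarith [h t]
  rw [discrim] at hdisc
  nlinarith [sq_nonneg b]

section SelfAdjoint

variable {𝕜 F : Type*} [RCLike 𝕜] [NormedAddCommGroup F] [InnerProductSpace 𝕜 F] [CompleteSpace F]

theorem IsSelfAdjoint.inner_apply_left {J : F →L[𝕜] F} (hJ : IsSelfAdjoint J) (x y : F) :
    ⟪J x, y⟫_𝕜 = ⟪x, J y⟫_𝕜 :=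
  hJ.isSymmetric x y

open RCLike in
theorem IsSelfAdjoint.re_inner_add_smul {J : F →L[𝕜] F} (hJ : IsSelfAdjoint J) (y d : F) (t : ℝ) :
    re ⟪J (y + (t : 𝕜) • d), y + (t : 𝕜) • d⟫_𝕜 =
      re ⟪J y, y⟫_𝕜 + 2 * t * re ⟪J d, y⟫_𝕜 + t ^ 2 * re ⟪J d, d⟫_𝕜 := by
  have hsymm : re ⟪J y, d⟫_𝕜 = re ⟪J d, y⟫_𝕜 := by
    rw [hJ.inner_apply_left, inner_re_symm]
  simp only [map_add, map_smul, inner_add_left, inner_add_right, inner_smul_left, inner_smul_right,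
    conj_ofReal, re_ofReal_mul, hsymm]
  ring

end SelfAdjoint

namespace ContinuousLinearMap

variable {𝕜 F G : Type*} [RCLike 𝕜]
  [NormedAddCommGroup F] [InnerProductSpace 𝕜 F] [CompleteSpace F]
  [NormedAddCommGroup G] [InnerProductSpace 𝕜 G] [CompleteSpace G]

theorem hasRightInverse_of_surjective {A : F →L[𝕜] G} (hA : Function.Surjective A) :
    A.HasRightInverse := by
  have hP : (A.ker.orthogonalProjectionOnto : F →ₗ[𝕜] A.ker).range = ⊤ :=
    LinearMap.range_eq_top.2 fun k => ⟨k, A.ker.orthogonalProjectionOnto_mem_subspace_eq_self k⟩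
  let Φ := A.equivProdOfSurjectiveOfIsCompl A.ker.orthogonalProjectionOnto
    (LinearMap.range_eq_top.2 hA) hP
    (by rw [Submodule.ker_orthogonalProjectionOnto]; exact Submodule.isCompl_orthogonal _)
  exact ⟨(Φ.symm : G × A.ker →L[𝕜] F) ∘L .inl 𝕜 G A.ker,
    fun g => congrArg Prod.fst (Φ.apply_symm_apply (g, 0))⟩

theorem range_adjoint_eq_orthogonal_ker {A : F →L[𝕜] G} (hA : A.HasRightInverse) :
    (adjoint A).range = A.kerᗮ := by
  have hAB : A ∘L hA.rightInverse = .id 𝕜 G := ext hA.rightInverse_rightInverse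
  have hleft : (adjoint A).HasLeftInverse :=
    ⟨adjoint hA.rightInverse, fun g => by
      rw [← comp_apply, ← adjoint_comp, hAB, adjoint_id, id_apply]⟩
  rw [orthogonal_ker]
  exact hleft.isClosed_range.submodule_topologicalClosure_eq.symm

end ContinuousLinearMap

/-- `[Lx, Lx]_ρ` for `L = (T, V)`. -/
def kreinQuad (JK : K →L[ℂ] K) (JE : E →L[ℂ] E) (T : H →L[ℂ] K) (V : H →L[ℂ] E) (ρ : ℝ)
    (x : H) : ℝ :=
  (⟪JK (T x), T x⟫).re + ρ * (⟪JE (V x), V x⟫).re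

def IsRangePositive (JK : K →L[ℂ] K) (JE : E →L[ℂ] E) (T : H →L[ℂ] K) (V : H →L[ℂ] E)
    (ρ : ℝ) : Prop :=
  ∀ x : H, (T x, V x) ≠ (0, 0) → 0 < kreinQuad JK JE T V ρ x

/-- `F_ρ(·; z₀)`. -/
def smObjective (JK : K →L[ℂ] K) (JE : E →L[ℂ] E) (T : H →L[ℂ] K) (V : H →L[ℂ] E) (ρ : ℝ)
    (z₀ : E) (x : H) : ℝ :=
  (⟪JK (T x), T x⟫).re + ρ * (⟪JE (V x - z₀), V x - z₀⟫).re

section Minimizers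

variable {JK : K →L[ℂ] K} {JE : E →L[ℂ] E} {T : H →L[ℂ] K} {V : H →L[ℂ] E} {ρ : ℝ}
  {z₀ w₀ : E} {xt u : H}

theorem IsRangePositive.kreinQuad_nonneg (hpos : IsRangePositive JK JE T V ρ) (x : H) :
    0 ≤ kreinQuad JK JE T V ρ x := by
  by_cases hx : (T x, V x) = (0, 0)
  · simp_all [kreinQuad]
  · exact (hpos x hx).le

theorem IsRangePositive.apply_eq_zero_of_kreinQuad_nonpos (hpos : IsRangePositive JK JE T V ρ)
    {x : H} (hx : kreinQuad JK JE T V ρ x ≤ 0) : V x = 0 := by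
  by_contra hVx
  exact (hpos x (by simp [hVx])).not_ge hx

theorem smObjective_add_smul (hJK : IsSelfAdjoint JK) (hJE : IsSelfAdjoint JE)
    (z₀ : E) (x d : H) (t : ℝ) :
    smObjective JK JE T V ρ z₀ (x + (t : ℂ) • d) = smObjective JK JE T V ρ z₀ x +
      2 * t * ((⟪JK (T d), T x⟫).re + ρ * (⟪JE (V d), V x - z₀⟫).re) +
      t ^ 2 * kreinQuad JK JE T V ρ d := by
  have hV : V (x + (t : ℂ) • d) - z₀ = (V x - z₀) + (t : ℂ) • V d := by
    rw [map_add, map_smul]; abel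
  have hK := hJK.re_inner_add_smul (T x) (T d) t
  have hE := hJE.re_inner_add_smul (V x - z₀) (V d) t
  simp only [RCLike.re_to_complex, RCLike.ofReal_eq_complex_ofReal] at hK hE
  rw [smObjective, smObjective, kreinQuad, hV, map_add, map_smul, hK, hE]
  ring

theorem mem_spSet_of_mem_smSet (hxt : xt ∈ smSet JK JE T V ρ z₀) : xt ∈ spSet JK T V (V xt) := by
  refine ⟨rfl, fun x hx => ?_⟩
  have hle := hxt x
  rw [hx] at hle
  linarith

theorem apply_eq_of_mem_smSet (hJK : IsSelfAdjoint JK) (hJE : IsSelfAdjoint JE)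
    (hpos : IsRangePositive JK JE T V ρ) (hxt : xt ∈ smSet JK JE T V ρ z₀)
    (hu : u ∈ smSet JK JE T V ρ z₀) : V u = V xt := by
  have hone := smObjective_add_smul (T := T) (V := V) (ρ := ρ) hJK hJE z₀ xt (u - xt) 1
  have hhalf := smObjective_add_smul (T := T) (V := V) (ρ := ρ) hJK hJE z₀ xt (u - xt) (1 / 2)
  rw [Complex.ofReal_one, one_smul, add_sub_cancel] at hone
  have hmid := hxt (xt + ((1 / 2 : ℝ) : ℂ) • (u - xt))
  have hxu := hu xt
  have hq : kreinQuad JK JE T V ρ (u - xt) ≤ 0 := by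
    simp only [smObjective] at hone hhalf
    linarith
  rw [← sub_eq_zero, ← map_sub]
  exact hpos.apply_eq_zero_of_kreinQuad_nonpos hq

theorem spSet_eq_smSet (hJK : IsSelfAdjoint JK) (hJE : IsSelfAdjoint JE)
    (hpos : IsRangePositive JK JE T V ρ) (hxt : xt ∈ smSet JK JE T V ρ z₀) :
    spSet JK T V (V xt) = smSet JK JE T V ρ z₀ := by
  ext u
  constructor
  · rintro ⟨hVu, hu⟩ x
    have hu_le := hu xt rfl
    have hxt_le := hxt x
    rw [hVu]
    linarith
  · intro hu
    have hVu := apply_eq_of_mem_smSet hJK hJE hpos hxt hu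
    refine ⟨hVu, fun x hx => ?_⟩
    have hle := hu x
    rw [hVu, hx] at hle
    linarith

theorem inner_eq_zero_of_mem_spSet (hJK : IsSelfAdjoint JK) (hxt : xt ∈ spSet JK T V w₀)
    {d : H} (hd : V d = 0) : ⟪JK (T d), T xt⟫ = 0 := by
  have hre : ∀ d, V d = 0 → (⟪JK (T d), T xt⟫).re = 0 := fun d hd =>
    eq_zero_of_forall_two_mul_mul_add_sq_mul_nonneg (c := (⟪JK (T d), T d⟫).re) fun t => by
      have hmin := hxt.2 (xt + (t : ℂ) • d) (by simp [hd, hxt.1])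
      have hK := hJK.re_inner_add_smul (T xt) (T d) t
      simp only [RCLike.re_to_complex, RCLike.ofReal_eq_complex_ofReal] at hK
      rw [map_add, map_smul, hK] at hmin
      linarith
  refine Complex.ext (hre d hd) ?_
  simpa [inner_smul_left] using hre (Complex.I • d) (by simp [hd])

/-- `Lx̃ - (0, z₀) ∈ R(L)^[⊥]` is the first-order condition for `F_ρ(·; z₀)` at `x̃`, which
suffices by convexity. -/
theorem mem_smSet_of_mem_RLperp (hJK : IsSelfAdjoint JK) (hJE : IsSelfAdjoint JE)
    (hpos : IsRangePositive JK JE T V ρ) (hperp : (T xt, V xt - z₀) ∈ RLperp JK JE T V ρ) :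
    xt ∈ smSet JK JE T V ρ z₀ := by
  intro x
  have hexp := smObjective_add_smul (T := T) (V := V) (ρ := ρ) hJK hJE z₀ xt (x - xt) 1
  rw [Complex.ofReal_one, one_smul, add_sub_cancel] at hexp
  have hstat := congrArg Complex.re (hperp (x - xt))
  simp only [Complex.add_re, Complex.re_ofReal_mul, Complex.zero_re] at hstat
  simp only [smObjective] at hexp
  nlinarith [hpos.kreinQuad_nonneg (x - xt)]

theorem exists_mem_smSet_of_mem_spSet (hJK : IsSelfAdjoint JK) (hJE : IsSelfAdjoint JE)
    (hJE2 : JE ∘L JE = 1) (hV : Function.Surjective V) (hρ : ρ ≠ 0)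
    (hpos : IsRangePositive JK JE T V ρ) (hxt : xt ∈ spSet JK T V w₀) :
    ∃ z₀, xt ∈ smSet JK JE T V ρ z₀ := by
  have hy : adjoint T (JK (T xt)) ∈ V.kerᗮ := by
    rw [Submodule.mem_orthogonal]
    intro d hd
    rw [adjoint_inner_right, ← hJK.inner_apply_left]
    exact inner_eq_zero_of_mem_spSet hJK hxt hd
  obtain ⟨u, hu : adjoint V u = adjoint T (JK (T xt))⟩ :
      adjoint T (JK (T xt)) ∈ (adjoint V).range := by
    rwa [range_adjoint_eq_orthogonal_ker (hasRightInverse_of_surjective hV)]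
  refine ⟨w₀ + (ρ⁻¹ : ℂ) • JE u, mem_smSet_of_mem_RLperp hJK hJE hpos fun d => ?_⟩
  have hJEJE : ⟪JE (V d), JE u⟫ = ⟪V d, u⟫ := by
    rw [hJE.inner_apply_left, ← comp_apply, hJE2, one_apply_eq_self]
  have hres : V xt - (w₀ + (ρ⁻¹ : ℂ) • JE u) = -(ρ⁻¹ : ℂ) • JE u := by
    rw [hxt.1, sub_add_cancel_left, neg_smul]
  rw [hres, inner_smul_right, hJEJE, ← adjoint_inner_right V d u, hu, adjoint_inner_right,
    ← hJK.inner_apply_left, ← mul_assoc, mul_neg,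
    mul_inv_cancel₀ (Complex.ofReal_ne_zero.2 hρ)]
  ring

end Minimizers

theorem stmt19_general
    (JK : K →L[ℂ] K) (hJKsa : IsSelfAdjoint JK)
    (JE : E →L[ℂ] E) (hJEsa : IsSelfAdjoint JE) (hJE2 : JE ∘L JE = 1)
    (T : H →L[ℂ] K) (V : H →L[ℂ] E)
    (hV : Function.Surjective V)
    (ρ : ℝ) (hρ : ρ ≠ 0)
    (hposR : ∀ x : H, (T x, V x) ≠ (0, 0) →
      0 < (⟪JK (T x), T x⟫).re + ρ * (⟪JE (V x), V x⟫).re) :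
    (∀ z₀ : E, (smSet JK JE T V ρ z₀).Nonempty →
      ∃ w₀ : E, (spSet JK T V w₀).Nonempty ∧ spSet JK T V w₀ = smSet JK JE T V ρ z₀) ∧
    (∀ w₀ : E, (spSet JK T V w₀).Nonempty →
      ∃ z₀ : E, spSet JK T V w₀ = smSet JK JE T V ρ z₀) := by
  have hpos : IsRangePositive JK JE T V ρ := hposR
  refine ⟨fun z₀ ⟨xt, hxt⟩ => ⟨V xt, ⟨xt, mem_spSet_of_mem_smSet hxt⟩,
    spSet_eq_smSet hJKsa hJEsa hpos hxt⟩, fun w₀ ⟨xt, hxt⟩ => ?_⟩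
  obtain ⟨z₀, hz₀⟩ := exists_mem_smSet_of_mem_spSet hJKsa hJEsa hJE2 hV hρ hpos hxt
  exact ⟨z₀, hxt.1 ▸ spSet_eq_smSet hJKsa hJEsa hpos hz₀⟩

theorem stmt19
    (JK : K →L[ℂ] K) (hJKsa : IsSelfAdjoint JK) (hJK2 : JK ∘L JK = 1)
    (JE : E →L[ℂ] E) (hJEsa : IsSelfAdjoint JE) (hJE2 : JE ∘L JE = 1)
    (T : H →L[ℂ] K) (V : H →L[ℂ] E)
    (hT : Function.Surjective T) (hV : Function.Surjective V)
    (ρ : ℝ) (hρ : ρ ≠ 0)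
    (hposR : ∀ x : H, (T x, V x) ≠ (0, 0) →
      0 < (⟪JK (T x), T x⟫).re + ρ * (⟪JE (V x), V x⟫).re)
    (hnd : Set.range (fun x : H => (T x, V x)) ∩ RLperp JK JE T V ρ = {0}) :
    (∀ z₀ : E, (smSet JK JE T V ρ z₀).Nonempty →
      ∃ w₀ : E, (spSet JK T V w₀).Nonempty ∧ spSet JK T V w₀ = smSet JK JE T V ρ z₀) ∧
    (∀ w₀ : E, (spSet JK T V w₀).Nonempty →
      ∃ z₀ : E, spSet JK T V w₀ = smSet JK JE T V ρ z₀) :=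
  stmt19_general JK hJKsa JE hJEsa hJE2 T V hV ρ hρ hposR
end
end
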